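/- Let 0 < α < n and let 1 < r < n/α with 1/q = 1/r − α/n. Then the p-adic fractional maximal operator M_α^p is bounded from L^r(Q_p^n) to L^q(Q_p^n): there is a constant C > 0 such that ‖M_α^p f‖_{L^q} ≤ C ‖f‖_{L^r} for all f ∈ L^r(Q_p^n). -/

import Mathlib

open MeasureTheory ENNReal

noncomputable section

variable {p : ℕ} [Fact p.Prime] {n : ℕ}

/-- The `p`-adic ball `B_γ(x) = {y : ‖y - x‖ ≤ p^γ}` in `ℚ_p^n`. -/
def pBall (x : Fin n → ℚ_[p]) (γ : ℤ) : Set (Fin n → ℚ_[p]) :=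
  Metric.closedBall x ((p : ℝ) ^ γ)

variable [MeasurableSpace (Fin n → ℚ_[p])]

/-- The `p`-adic fractional maximal function `M_α^p f` (with values in `ℝ≥0∞`). -/
def fracMax (μ : Measure (Fin n → ℚ_[p])) (α : ℝ) (f : (Fin n → ℚ_[p]) → ℝ)
    (x : Fin n → ℚ_[p]) : ℝ≥0∞ :=
  ⨆ γ : ℤ, μ (pBall x γ) ^ (α / (n : ℝ) - 1) * ∫⁻ y in pBall x γ, (‖f y‖₊ : ℝ≥0∞) ∂μ

/-- The fractional maximal function `M_{α,B*}^p f` restricted to a fixed ball `B*`. -/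
def fracMaxOn (μ : Measure (Fin n → ℚ_[p])) (α : ℝ) (B : Set (Fin n → ℚ_[p]))
    (f : (Fin n → ℚ_[p]) → ℝ) (x : Fin n → ℚ_[p]) : ℝ≥0∞ :=
  ⨆ (γ : ℤ), ⨆ (_ : pBall x γ ⊆ B),
    μ (pBall x γ) ^ (α / (n : ℝ) - 1) * ∫⁻ y in pBall x γ, (‖f y‖₊ : ℝ≥0∞) ∂μ

/-- The maximal commutator `M_{α,b}^p f`. -/
def maxComm (μ : Measure (Fin n → ℚ_[p])) (α : ℝ) (b f : (Fin n → ℚ_[p]) → ℝ)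
    (x : Fin n → ℚ_[p]) : ℝ≥0∞ :=
  ⨆ γ : ℤ, μ (pBall x γ) ^ (α / (n : ℝ) - 1) *
    ∫⁻ y in pBall x γ, (‖b x - b y‖₊ : ℝ≥0∞) * (‖f y‖₊ : ℝ≥0∞) ∂μ

/-- The nonlinear commutator `[b, M_α^p] f = b · M_α^p f - M_α^p (b f)`. -/
def nlComm (μ : Measure (Fin n → ℚ_[p])) (α : ℝ) (b f : (Fin n → ℚ_[p]) → ℝ)
    (x : Fin n → ℚ_[p]) : ℝ :=
  b x * (fracMax μ α f x).toReal - (fracMax μ α (fun y => b y * f y) x).toReal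

/-- Membership in the `p`-adic Lipschitz space `Λ_β`. -/
def MemLipschitz (β : ℝ) (f : (Fin n → ℚ_[p]) → ℝ) : Prop :=
  ∃ C : ℝ, 0 ≤ C ∧ ∀ x y, |f x - f y| ≤ C * ‖x - y‖ ^ β

/-- The `p`-adic Lipschitz norm `‖f‖_{Λ_β}`. -/
def lipNorm (β : ℝ) (f : (Fin n → ℚ_[p]) → ℝ) : ℝ :=
  sSup {r : ℝ | ∃ x y : Fin n → ℚ_[p], x ≠ y ∧ r = |f x - f y| / ‖x - y‖ ^ β}

/-- The average `b_B` of `b` over a set `B`. -/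
def avg (μ : Measure (Fin n → ℚ_[p])) (B : Set (Fin n → ℚ_[p]))
    (b : (Fin n → ℚ_[p]) → ℝ) : ℝ :=
  (μ B).toReal⁻¹ * ∫ y in B, b y ∂μ

/-- The Luxemburg norm of an `ℝ≥0∞`-valued function. -/
def luxNormE (μ : Measure (Fin n → ℚ_[p])) (q : (Fin n → ℚ_[p]) → ℝ)
    (g : (Fin n → ℚ_[p]) → ℝ≥0∞) : ℝ≥0∞ :=
  sInf {η : ℝ≥0∞ | 0 < η ∧ η < ⊤ ∧ ∫⁻ x, (g x / η) ^ q x ∂μ ≤ 1}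

/-- The Luxemburg norm `‖f‖_{L^{q(·)}}` of a real-valued function. -/
def luxNorm (μ : Measure (Fin n → ℚ_[p])) (q : (Fin n → ℚ_[p]) → ℝ)
    (f : (Fin n → ℚ_[p]) → ℝ) : ℝ≥0∞ :=
  luxNormE μ q fun x => (‖f x‖₊ : ℝ≥0∞)

/-- The class `P(ℚ_p^n)` of variable exponents: `1 < r₋ ≤ r₊ < ∞`. -/
def IsPExp (μ : Measure (Fin n → ℚ_[p])) (r : (Fin n → ℚ_[p]) → ℝ) : Prop :=
  Measurable r ∧ (∀ x, 1 ≤ r x) ∧ 1 < essInf r μ ∧ ∃ M : ℝ, ∀ᵐ x ∂μ, r x ≤ M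

/-- The class `C^log(ℚ_p^n)` of globally log-Hölder continuous variable exponents. -/
def IsLogHolder (μ : Measure (Fin n → ℚ_[p])) (r : (Fin n → ℚ_[p]) → ℝ) : Prop :=
  Measurable r ∧ (∀ x, 1 ≤ r x) ∧
    ∃ C : ℝ, 0 ≤ C ∧
      (∀ (γ : ℤ) (x : Fin n → ℚ_[p]),
        (γ : ℝ) * (essInf r (μ.restrict (pBall x γ)) - essSup r (μ.restrict (pBall x γ))) ≤ C) ∧
      ∀ x y : Fin n → ℚ_[p], |r x - r y| ≤ C / Real.logb p ((p : ℝ) + min ‖x‖ ‖y‖)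

/-- The set of values whose supremum is the `lip_β^q` norm. -/
def lipqSet (μ : Measure (Fin n → ℚ_[p])) (β q : ℝ) (f : (Fin n → ℚ_[p]) → ℝ) : Set ℝ :=
  {r : ℝ | ∃ (x : Fin n → ℚ_[p]) (γ : ℤ),
    r = (μ (pBall x γ)).toReal ^ (-(β / (n : ℝ))) *
      ((μ (pBall x γ)).toReal⁻¹ * ∫ y in pBall x γ, |f y - avg μ (pBall x γ) f| ^ q ∂μ) ^ (1 / q)}


-- ===== auxiliary development =====
section FracMaxAux
open Metric
set_option linter.unusedSectionVars false
set_option linter.unusedVariables false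
set_option maxHeartbeats 1000000

instance piUltra : IsUltrametricDist (Fin n → ℚ_[p]) := by
  constructor
  intro x y z
  rw [dist_pi_le_iff (le_max_iff.2 (Or.inl dist_nonneg))]
  intro i
  exact (IsUltrametricDist.dist_triangle_max (x i) (y i) (z i)).trans
    (max_le_max (dist_le_pi_dist x y i) (dist_le_pi_dist y z i))

lemma p_one_lt : (1:ℝ) < (p:ℝ) := by exact_mod_cast (Fact.out : p.Prime).one_lt

lemma pPow_pos (γ : ℤ) : (0:ℝ) < (p:ℝ) ^ γ := zpow_pos (by exact_mod_cast (Fact.out : p.Prime).pos) γ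

lemma pBall_eq_of_mem {x y : Fin n → ℚ_[p]} {γ : ℤ} (h : y ∈ pBall x γ) :
    pBall x γ = pBall y γ := IsUltrametricDist.closedBall_eq_of_mem h

lemma mem_pBall_self (x : Fin n → ℚ_[p]) (γ : ℤ) : x ∈ pBall x γ :=
  mem_closedBall_self (pPow_pos γ).le

lemma pBall_mono (x : Fin n → ℚ_[p]) {γ γ' : ℤ} (h : γ ≤ γ') : pBall x γ ⊆ pBall x γ' :=
  closedBall_subset_closedBall (zpow_le_zpow_right₀ p_one_lt.le h)

lemma isOpen_pBall (x : Fin n → ℚ_[p]) (γ : ℤ) : IsOpen (pBall x γ) :=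
  IsUltrametricDist.isOpen_closedBall x (pPow_pos γ).ne'

variable [BorelSpace (Fin n → ℚ_[p])]

lemma measurableSet_pBall {x : Fin n → ℚ_[p]} {γ : ℤ} : MeasurableSet (pBall x γ) :=
  measurableSet_closedBall

variable (μ : Measure (Fin n → ℚ_[p])) [μ.IsAddHaarMeasure]

lemma measure_pBall_eq (x : Fin n → ℚ_[p]) (γ : ℤ) :
    μ (pBall x γ) = μ (pBall 0 γ) := by
  have : pBall x γ = (fun y => -x + y) ⁻¹' (pBall 0 γ) := by
    ext y
    simp [pBall, Metric.mem_closedBall, dist_eq_norm, neg_add_eq_sub]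
  rw [this, measure_preimage_add]

lemma measure_pBall_pos (x : Fin n → ℚ_[p]) (γ : ℤ) : 0 < μ (pBall x γ) :=
  (isOpen_pBall x γ).measure_pos μ ⟨x, mem_pBall_self x γ⟩

lemma measure_pBall_lt_top (x : Fin n → ℚ_[p]) (γ : ℤ) : μ (pBall x γ) < ∞ :=
  (isCompact_closedBall x _).measure_lt_top

lemma iSup_measure_pBall (hn : 0 < n) : ⨆ γ : ℤ, μ (pBall (0 : Fin n → ℚ_[p]) γ) = ∞ := by
  have hnc : NoncompactSpace (Fin n → ℚ_[p]) := by
    constructor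
    intro hcomp
    obtain ⟨C, hC⟩ := Metric.isBounded_iff.1 hcomp.isBounded
    obtain ⟨k, hk⟩ := pow_unbounded_of_one_lt C (p_one_lt (p := p))
    set x : Fin n → ℚ_[p] := fun _ => (p : ℚ_[p]) ^ (-(k:ℤ))
    have hx : ((p:ℝ)) ^ (k:ℕ) ≤ dist x 0 := by
      have h1 : ‖x ⟨0, hn⟩‖ ≤ ‖x‖ := norm_le_pi_norm x ⟨0, hn⟩
      have h2 : ‖x ⟨0, hn⟩‖ = (p:ℝ) ^ (k:ℕ) := by
        show ‖(p : ℚ_[p]) ^ (-(k:ℤ))‖ = _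
        rw [norm_zpow, Padic.norm_p]
        rw [← zpow_natCast]
        rw [inv_zpow, ← zpow_neg, neg_neg]
      rw [dist_zero_right]
      rw [← h2] at *
      exact h1
    have := hC (Set.mem_univ x) (Set.mem_univ 0)
    linarith
  have h1 : (Set.univ : Set (Fin n → ℚ_[p])) = ⋃ γ : ℤ, pBall 0 γ := by
    ext y
    simp only [Set.mem_univ, true_iff, Set.mem_iUnion]
    obtain ⟨k, hk⟩ := pow_unbounded_of_one_lt ‖y‖ (p_one_lt (p := p))
    exact ⟨k, by simpa [pBall, Metric.mem_closedBall, dist_zero_right, zpow_natCast] using hk.le⟩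
  have h2 := Directed.measure_iUnion (μ := μ) (s := fun γ : ℤ => pBall (0 : Fin n → ℚ_[p]) γ)
    (Monotone.directed_le fun a b hab => pBall_mono _ hab)
  rw [← h2, ← h1]
  exact measure_univ_of_isAddLeftInvariant μ

/-- The Hardy–Littlewood maximal function adapted to `p`-adic balls. -/
def maxFn (g : (Fin n → ℚ_[p]) → ℝ≥0∞) (x : Fin n → ℚ_[p]) : ℝ≥0∞ :=
  ⨆ γ : ℤ, (μ (pBall (0 : Fin n → ℚ_[p]) γ))⁻¹ * ∫⁻ y in pBall x γ, g y ∂μ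

lemma measurable_lintegral_pBall (g : (Fin n → ℚ_[p]) → ℝ≥0∞) (γ : ℤ) :
    Measurable (fun x => ∫⁻ y in pBall x γ, g y ∂μ) := by
  intro s _
  refine IsOpen.measurableSet ?_
  rw [Metric.isOpen_iff]
  intro x hx
  refine ⟨(p:ℝ)^γ, pPow_pos γ, fun y hy => ?_⟩
  have : pBall x γ = pBall y γ :=
    pBall_eq_of_mem (Metric.mem_closedBall.2 (le_of_lt (by have := Metric.mem_ball.1 hy; rwa [dist_comm] at this)))
  simpa [Set.mem_preimage, ← this] using hx

lemma measurable_maxFn (g : (Fin n → ℚ_[p]) → ℝ≥0∞) : Measurable (maxFn μ g) :=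
  Measurable.iSup fun γ => (measurable_lintegral_pBall μ g γ).const_mul _

lemma maxFn_add_le (g₁ g₂ : (Fin n → ℚ_[p]) → ℝ≥0∞) (hg₁ : Measurable g₁) :
    ∀ x, maxFn μ (g₁ + g₂) x ≤ maxFn μ g₁ x + maxFn μ g₂ x := by
  intro x
  refine iSup_le fun γ => ?_
  rw [Pi.add_def, lintegral_add_left hg₁, mul_add]
  exact add_le_add (le_iSup (fun γ => (μ (pBall (0:Fin n → ℚ_[p]) γ))⁻¹ *
    ∫⁻ y in pBall x γ, g₁ y ∂μ) γ) (le_iSup (fun γ => (μ (pBall (0:Fin n → ℚ_[p]) γ))⁻¹ *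
    ∫⁻ y in pBall x γ, g₂ y ∂μ) γ)

lemma maxFn_le_of_le {g : (Fin n → ℚ_[p]) → ℝ≥0∞} {c : ℝ≥0∞} (h : ∀ y, g y ≤ c) (x) :
    maxFn μ g x ≤ c := by
  refine iSup_le fun γ => ?_
  calc (μ (pBall (0:Fin n → ℚ_[p]) γ))⁻¹ * ∫⁻ y in pBall x γ, g y ∂μ
      ≤ (μ (pBall (0:Fin n → ℚ_[p]) γ))⁻¹ * ∫⁻ _ in pBall x γ, c ∂μ := by
        gcongr with y; exact h y
    _ = (μ (pBall (0:Fin n → ℚ_[p]) γ))⁻¹ * (c * μ (pBall x γ)) := by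
        rw [setLIntegral_const]
    _ = c * ((μ (pBall (0:Fin n → ℚ_[p]) γ))⁻¹ * μ (pBall (0:Fin n → ℚ_[p]) γ)) := by
        rw [measure_pBall_eq μ x γ]; ring
    _ ≤ c * 1 := by gcongr; exact ENNReal.inv_mul_le_one _
    _ = c := mul_one c

lemma weak11 (hn : 0 < n) {g : (Fin n → ℚ_[p]) → ℝ≥0∞} (hI : ∫⁻ y, g y ∂μ ≠ ∞)
    {lam : ℝ≥0∞} (h0 : lam ≠ 0) (htop : lam ≠ ∞) :
    lam * μ {x | lam < maxFn μ g x} ≤ ∫⁻ y, g y ∂μ := by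
  set I := ∫⁻ y, g y ∂μ with hIdef
  set E := {x | lam < maxFn μ g x} with hE
  have key : ∀ x : E, ∃ γ : ℤ, (lam * μ (pBall (0 : Fin n → ℚ_[p]) γ) <
      ∫⁻ y in pBall (x:Fin n → ℚ_[p]) γ, g y ∂μ)
      ∧ ∀ γ' : ℤ, (lam * μ (pBall (0 : Fin n → ℚ_[p]) γ') <
        ∫⁻ y in pBall (x:Fin n → ℚ_[p]) γ', g y ∂μ) → γ' ≤ γ := by
    rintro ⟨x, hx⟩
    have hx' : lam < maxFn μ g x := hx
    obtain ⟨γ₀, hγ₀⟩ := lt_iSup_iff.1 hx'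
    have h1 : lam * μ (pBall (0 : Fin n → ℚ_[p]) γ₀) < ∫⁻ y in pBall x γ₀, g y ∂μ := by
      have hV0 : μ (pBall (0 : Fin n → ℚ_[p]) γ₀) ≠ 0 := (measure_pBall_pos μ 0 γ₀).ne'
      have hVt : μ (pBall (0 : Fin n → ℚ_[p]) γ₀) ≠ ∞ := (measure_pBall_lt_top μ 0 γ₀).ne
      have := ENNReal.mul_lt_mul_left hV0 hVt hγ₀
      rwa [mul_comm ((μ (pBall (0 : Fin n → ℚ_[p]) γ₀))⁻¹) _, mul_assoc,
        ENNReal.inv_mul_cancel hV0 hVt, mul_one] at this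
    obtain ⟨γ₁, hγ₁⟩ : ∃ γ₁, I < lam * μ (pBall (0 : Fin n → ℚ_[p]) γ₁) := by
      by_contra hcon
      push_neg at hcon
      have h2 : (⨆ γ : ℤ, lam * μ (pBall (0 : Fin n → ℚ_[p]) γ)) ≤ I := iSup_le hcon
      rw [← ENNReal.mul_iSup, iSup_measure_pBall μ hn, ENNReal.mul_top h0] at h2
      exact hI (top_le_iff.1 h2)
    refine Int.exists_greatest_of_bdd ⟨γ₁, fun z hz => ?_⟩ ⟨γ₀, h1⟩
    by_contra hcon
    push_neg at hcon
    have hmono : μ (pBall (0 : Fin n → ℚ_[p]) γ₁) ≤ μ (pBall (0 : Fin n → ℚ_[p]) z) :=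
      measure_mono (pBall_mono 0 hcon.le)
    have : lam * μ (pBall (0 : Fin n → ℚ_[p]) z) < I :=
      lt_of_lt_of_le hz (setLIntegral_le_lintegral _ _)
    exact (this.trans (hγ₁.trans_le (mul_le_mul_right hmono lam))).false
  choose Γ hΓ1 hΓ2 using key
  set Bs : E → Set (Fin n → ℚ_[p]) := fun x => pBall (x : Fin n → ℚ_[p]) (Γ x) with hBs
  have memB : ∀ x : E, (x : Fin n → ℚ_[p]) ∈ Bs x := fun x => mem_pBall_self _ _
  have eqOrDisj : ∀ x y : E, (Bs x ∩ Bs y).Nonempty → Bs x = Bs y := by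
    have main : ∀ x y : E, Γ x ≤ Γ y → (Bs x ∩ Bs y).Nonempty → Bs x = Bs y := by
      rintro x y hxy ⟨z, hzx, hzy⟩
      have e1 : pBall (y : Fin n → ℚ_[p]) (Γ y) = pBall z (Γ y) := pBall_eq_of_mem hzy
      have hz2 : z ∈ pBall (x : Fin n → ℚ_[p]) (Γ y) := pBall_mono _ hxy hzx
      have e2 : pBall (x : Fin n → ℚ_[p]) (Γ y) = pBall z (Γ y) := pBall_eq_of_mem hz2
      have e3 : pBall (x : Fin n → ℚ_[p]) (Γ y) = pBall (y : Fin n → ℚ_[p]) (Γ y) :=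
        e2.trans e1.symm
      have hgood : lam * μ (pBall (0 : Fin n → ℚ_[p]) (Γ y)) <
          ∫⁻ w in pBall (x : Fin n → ℚ_[p]) (Γ y), g w ∂μ := by
        rw [e3]; exact hΓ1 y
      have heq : Γ x = Γ y := le_antisymm hxy (hΓ2 x _ hgood)
      show pBall (x : Fin n → ℚ_[p]) (Γ x) = pBall (y : Fin n → ℚ_[p]) (Γ y)
      rw [heq, e3]
    intro x y hne
    rcases le_total (Γ x) (Γ y) with h|h
    · exact main x y h hne
    · exact (main y x h (by obtain ⟨z, h1, h2⟩ := hne; exact ⟨z, h2, h1⟩)).symm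
  obtain ⟨D, hDc, hDd⟩ := TopologicalSpace.exists_countable_dense (Fin n → ℚ_[p])
  have hCc : (Set.range Bs).Countable := by
    have hsub : Set.range Bs ⊆ (fun cg : (Fin n → ℚ_[p]) × ℤ => pBall cg.1 cg.2) ''
        (D ×ˢ (Set.univ : Set ℤ)) := by
      rintro B ⟨x, rfl⟩
      obtain ⟨d, hdD, hdB⟩ := hDd.exists_mem_open (isOpen_pBall (x : Fin n → ℚ_[p]) (Γ x))
        ⟨_, memB x⟩
      exact ⟨(d, Γ x), ⟨hdD, trivial⟩, (pBall_eq_of_mem hdB).symm⟩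
    exact ((hDc.prod Set.countable_univ).image _).mono hsub
  haveI := hCc.to_subtype
  have hdisj : Pairwise (Function.onFun Disjoint (fun B : Set.range Bs => (B : Set (Fin n → ℚ_[p])))) := by
    rintro ⟨B, hB⟩ ⟨B', hB'⟩ hne
    obtain ⟨x, rfl⟩ := hB
    obtain ⟨y, rfl⟩ := hB'
    rw [Function.onFun]
    by_contra hcon
    rw [Set.not_disjoint_iff_nonempty_inter] at hcon
    exact hne (Subtype.ext (eqOrDisj x y hcon))
  have hmeas : ∀ B : Set.range Bs, MeasurableSet (B : Set (Fin n → ℚ_[p])) := by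
    rintro ⟨B, hB⟩; obtain ⟨x, rfl⟩ := hB; exact measurableSet_pBall
  have hrep : ∀ B : Set.range Bs, lam * μ (B : Set (Fin n → ℚ_[p])) ≤
      ∫⁻ y in (B : Set (Fin n → ℚ_[p])), g y ∂μ := by
    rintro ⟨B, hB⟩; obtain ⟨x, rfl⟩ := hB
    have := hΓ1 x
    rw [← measure_pBall_eq μ (x : Fin n → ℚ_[p]) (Γ x)] at this
    exact this.le
  have hcover : E ⊆ ⋃ B : Set.range Bs, (B : Set (Fin n → ℚ_[p])) := fun x hx =>
    Set.mem_iUnion.2 ⟨⟨Bs ⟨x, hx⟩, Set.mem_range_self _⟩, memB ⟨x, hx⟩⟩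
  calc lam * μ E ≤ lam * μ (⋃ B : Set.range Bs, (B : Set (Fin n → ℚ_[p]))) :=
        mul_le_mul_right (measure_mono hcover) lam
    _ = lam * ∑' B : Set.range Bs, μ (B : Set (Fin n → ℚ_[p])) := by
        rw [measure_iUnion hdisj hmeas]
    _ = ∑' B : Set.range Bs, lam * μ (B : Set (Fin n → ℚ_[p])) := ENNReal.tsum_mul_left.symm
    _ ≤ ∑' B : Set.range Bs, ∫⁻ y in (B : Set (Fin n → ℚ_[p])), g y ∂μ :=
        ENNReal.tsum_le_tsum hrep
    _ = ∫⁻ y in ⋃ B : Set.range Bs, (B : Set (Fin n → ℚ_[p])), g y ∂μ :=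
        (lintegral_iUnion hmeas hdisj _).symm
    _ ≤ I := setLIntegral_le_lintegral _ _


end FracMaxAux

section FracMaxAux2
set_option maxHeartbeats 1000000
lemma aux_le_rpow_mul {c a : ℝ≥0∞} (hc0 : c ≠ 0) (hctop : c ≠ ∞) (hca : c ≤ a)
    {r : ℝ} (hr : 1 ≤ r) : a ≤ c ^ (1 - r) * a ^ r := by
  have hcp : c ^ (1 - r) ≠ 0 :=
    (ENNReal.rpow_pos (lt_of_le_of_ne (zero_le (a := c)) (Ne.symm hc0)) hctop).ne'
  rcases eq_or_ne a ∞ with rfl | hatop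
  · rw [ENNReal.top_rpow_of_pos (by linarith), ENNReal.mul_top hcp]
  · have ha0 : a ≠ 0 := fun h => hc0 (le_antisymm (h ▸ hca) (zero_le (a := c)))
    have h1 : a = a ^ (1 - r) * a ^ r := by
      rw [← ENNReal.rpow_add _ _ ha0 hatop]; norm_num
    calc a = a ^ (1-r) * a ^ r := h1
      _ ≤ c ^ (1-r) * a ^ r := by
          refine mul_le_mul_left ?_ (a ^ r)
          rw [show (1:ℝ) - r = -(r-1) by ring, ENNReal.rpow_neg, ENNReal.rpow_neg]
          exact ENNReal.inv_le_inv.2 (ENNReal.rpow_le_rpow hca (by linarith))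

lemma aux_geom {r : ℝ} (hr : 1 < r) (t : ℝ≥0∞) :
    ∑' k : ℤ, (if (2:ℝ≥0∞) ^ ((k:ℝ)-1) < t then (2:ℝ≥0∞) ^ ((r-1)*(k:ℝ)) else 0) * t
      ≤ (1 - (2:ℝ≥0∞) ^ (1-r))⁻¹ * (2:ℝ≥0∞) ^ (r-1) * t ^ r := by
  have h20 : (2:ℝ≥0∞) ≠ 0 := by norm_num
  have h2t : (2:ℝ≥0∞) ≠ ∞ := by norm_num
  have hfac0 : (1 - (2:ℝ≥0∞) ^ (1-r))⁻¹ ≠ 0 := by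
    refine ENNReal.inv_ne_zero.2 ?_
    exact ne_top_of_le_ne_top one_ne_top tsub_le_self
  rcases eq_or_ne t 0 with rfl | ht0
  · simp
  rcases eq_or_ne t ∞ with rfl | httop
  · rw [ENNReal.top_rpow_of_pos (by linarith), ENNReal.mul_top
      (mul_ne_zero hfac0 (ENNReal.rpow_pos (by norm_num) h2t).ne')]
    exact le_top
  obtain ⟨k₀, hk₀, hk₀max⟩ : ∃ k₀ : ℤ, ((2:ℝ≥0∞) ^ ((k₀:ℝ)-1) < t) ∧
      ∀ z : ℤ, ((2:ℝ≥0∞) ^ ((z:ℝ)-1) < t) → z ≤ k₀ := by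
    refine Int.exists_greatest_of_bdd ?_ ?_
    · obtain ⟨m, hm⟩ := ENNReal.exists_nat_gt httop
      refine ⟨m + 1, fun z hz => ?_⟩
      by_contra hcon
      push_neg at hcon
      have h1 : ((m:ℝ≥0∞)) ≤ (2:ℝ≥0∞) ^ ((z:ℝ)-1) := by
        calc ((m:ℝ≥0∞)) ≤ (2:ℝ≥0∞) ^ (m:ℕ) := by
              exact_mod_cast Nat.cast_le.2 (Nat.lt_two_pow_self (n := m)).le
          _ = (2:ℝ≥0∞) ^ ((m:ℝ)) := by rw [← ENNReal.rpow_natCast]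
          _ ≤ (2:ℝ≥0∞) ^ ((z:ℝ)-1) := by
              apply ENNReal.rpow_le_rpow_of_exponent_le (by norm_num)
              have h2 : (m:ℤ) + 1 < z := hcon
              have h3 : ((m:ℝ)) + 1 < (z:ℝ) := by exact_mod_cast h2
              linarith
      exact absurd (h1.trans_lt hz) hm.not_gt
    · obtain ⟨m, hm⟩ := ENNReal.exists_inv_two_pow_lt ht0
      refine ⟨-(m:ℤ) + 1, ?_⟩
      have he : ((-(m:ℤ)+1 : ℤ):ℝ) - 1 = -(m:ℝ) := by push_cast; ring
      rw [he, ENNReal.rpow_neg, ENNReal.rpow_natCast, ENNReal.inv_pow]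
      exact hm
  have hPiff : ∀ k : ℤ, ((2:ℝ≥0∞) ^ ((k:ℝ)-1) < t) ↔ k ≤ k₀ := by
    intro k
    refine ⟨hk₀max k, fun hk => lt_of_le_of_lt ?_ hk₀⟩
    apply ENNReal.rpow_le_rpow_of_exponent_le (by norm_num)
    have : (k:ℝ) ≤ (k₀:ℝ) := by exact_mod_cast hk
    linarith
  calc ∑' k : ℤ, (if (2:ℝ≥0∞) ^ ((k:ℝ)-1) < t then (2:ℝ≥0∞) ^ ((r-1)*(k:ℝ)) else 0) * t
      = (∑' k : ℤ, (if k ≤ k₀ then (2:ℝ≥0∞) ^ ((r-1)*(k:ℝ)) else 0)) * t := by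
        rw [ENNReal.tsum_mul_right]
        congr 1
        exact tsum_congr fun k => by rw [if_congr (hPiff k) rfl rfl]
    _ = (∑' j : ℕ, (if (k₀ - j : ℤ) ≤ k₀ then (2:ℝ≥0∞) ^ ((r-1)*((k₀ - j : ℤ):ℝ)) else 0)) * t := by
        congr 1
        refine (Function.Injective.tsum_eq (f := fun k : ℤ => if k ≤ k₀ then
          (2:ℝ≥0∞) ^ ((r-1)*(k:ℝ)) else 0) (g := fun j : ℕ => k₀ - j) ?_ ?_).symm
        · intro a b hab
          have h : k₀ - (a:ℤ) = k₀ - (b:ℤ) := hab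
          omega
        · intro k hk
          simp only [Function.mem_support, ne_eq, ite_eq_right_iff, not_forall] at hk
          obtain ⟨hkk, -⟩ := hk
          exact ⟨(k₀ - k).toNat, show k₀ - ((k₀ - k).toNat : ℤ) = k by omega⟩
    _ = (∑' j : ℕ, (2:ℝ≥0∞) ^ ((r-1)*(k₀:ℝ)) * ((2:ℝ≥0∞) ^ (1-r)) ^ j) * t := by
        congr 1
        refine tsum_congr fun j => ?_
        rw [if_pos (by omega)]
        rw [show (r-1)*(((k₀ - j : ℤ)):ℝ) = (r-1)*(k₀:ℝ) + (1-r)*(j:ℝ) by push_cast; ring]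
        rw [ENNReal.rpow_add _ _ h20 h2t]
        congr 1
        rw [ENNReal.rpow_mul, ENNReal.rpow_natCast]
    _ = (2:ℝ≥0∞) ^ ((r-1)*(k₀:ℝ)) * (1 - (2:ℝ≥0∞) ^ (1-r))⁻¹ * t := by
        rw [ENNReal.tsum_mul_left, ENNReal.tsum_geometric]
    _ ≤ (t ^ (r-1) * (2:ℝ≥0∞) ^ (r-1)) * (1 - (2:ℝ≥0∞) ^ (1-r))⁻¹ * t := by
        refine mul_le_mul_left (mul_le_mul_left ?_ _) _
        have heq : (2:ℝ≥0∞) ^ ((r-1)*(k₀:ℝ)) = ((2:ℝ≥0∞) ^ ((k₀:ℝ)-1)) ^ (r-1) * (2:ℝ≥0∞) ^ (r-1) := by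
          rw [← ENNReal.rpow_mul, ← ENNReal.rpow_add _ _ h20 h2t]
          ring_nf
        rw [heq]
        exact mul_le_mul_left (ENNReal.rpow_le_rpow hk₀.le (by linarith)) _
    _ = (1 - (2:ℝ≥0∞) ^ (1-r))⁻¹ * (2:ℝ≥0∞) ^ (r-1) * t ^ r := by
        have h : t ^ (1:ℝ) * t ^ (r-1) = t ^ r := by
          rw [← ENNReal.rpow_add _ _ ht0 httop]; norm_num
        rw [← h, ENNReal.rpow_one]; ring

end FracMaxAux2

section FracMaxAux3
open Metric
set_option linter.unusedSectionVars false
set_option linter.unusedVariables false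
set_option maxHeartbeats 1000000
variable [BorelSpace (Fin n → ℚ_[p])]
variable (μ : Measure (Fin n → ℚ_[p])) [μ.IsAddHaarMeasure]

lemma strongType (hn : 0 < n) {r : ℝ} (hr : 1 < r) {g : (Fin n → ℚ_[p]) → ℝ≥0∞}
    (hg : Measurable g) (hgr : ∫⁻ x, g x ^ r ∂μ ≠ ∞) :
    ∫⁻ x, (maxFn μ g x) ^ r ∂μ ≤
      (2:ℝ≥0∞) ^ (r+1) * ((1 - (2:ℝ≥0∞) ^ (1-r))⁻¹ * (2:ℝ≥0∞) ^ (r-1)) * ∫⁻ x, g x ^ r ∂μ := by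
  have h20 : (2:ℝ≥0∞) ≠ 0 := by norm_num
  have h2t : (2:ℝ≥0∞) ≠ ∞ := by norm_num
  have hrpos : (0:ℝ) < r := by linarith
  set M := maxFn μ g with hM
  set Ir := ∫⁻ x, g x ^ r ∂μ with hIr
  set lam : ℤ → ℝ≥0∞ := fun k => (2:ℝ≥0∞) ^ ((k:ℝ)-1) with hlam
  have hrpow_ne_top : ∀ (a : ℝ≥0∞), a ≠ 0 → a ≠ ∞ → ∀ e : ℝ, a ^ e ≠ ∞ := by
    intro a ha0 hat e h
    rcases ENNReal.rpow_eq_top_iff.1 h with ⟨h1, _⟩ | ⟨h1, _⟩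
    exacts [ha0 h1, hat h1]
  have hlam0 : ∀ k, lam k ≠ 0 := fun k => (ENNReal.rpow_pos (by norm_num) h2t).ne'
  have hlamt : ∀ k, lam k ≠ ∞ := fun k => hrpow_ne_top 2 h20 h2t _
  set gk : ℤ → (Fin n → ℚ_[p]) → ℝ≥0∞ := fun k x => if lam k < g x then g x else 0 with hgk
  have hgkmeas : ∀ k, Measurable (gk k) := fun k =>
    Measurable.ite (measurableSet_lt measurable_const hg) hg measurable_const
  -- pointwise bound for gk
  have hgkptw : ∀ k x, gk k x ≤ (lam k) ^ (1-r) * (g x) ^ r := by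
    intro k x
    simp only [hgk]
    split_ifs with h
    · exact aux_le_rpow_mul (hlam0 k) (hlamt k) h.le hr.le
    · exact zero_le
  have hgkint : ∀ k, ∫⁻ x, gk k x ∂μ ≤ (lam k) ^ (1-r) * Ir := by
    intro k
    calc ∫⁻ x, gk k x ∂μ ≤ ∫⁻ x, (lam k) ^ (1-r) * (g x) ^ r ∂μ :=
          lintegral_mono fun x => hgkptw k x
      _ = (lam k) ^ (1-r) * Ir := lintegral_const_mul' _ _
          (hrpow_ne_top _ (hlam0 k) (hlamt k) _)
  have hgkfin : ∀ k, ∫⁻ x, gk k x ∂μ ≠ ∞ := fun k =>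
    ne_top_of_le_ne_top (ENNReal.mul_ne_top (hrpow_ne_top _ (hlam0 k) (hlamt k) _) hgr)
      (hgkint k)
  -- truncation bound on the maximal function
  have hsplit : ∀ k, g = fun x => gk k x + (if lam k < g x then 0 else g x) := by
    intro k
    funext x
    simp only [hgk]
    split_ifs <;> simp
  have step1 : ∀ k x, M x ≤ maxFn μ (gk k) x + lam k := by
    intro k x
    have h1 : M x = maxFn μ (fun y => gk k y + (if lam k < g y then 0 else g y)) x := by
      rw [hM, ← hsplit k]
    rw [h1]
    refine le_trans (maxFn_add_le μ _ _ (hgkmeas k) x) ?_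
    refine add_le_add le_rfl (maxFn_le_of_le μ (fun y => ?_) x)
    split_ifs with h
    · exact zero_le
    · exact not_lt.1 h
  have hdouble : ∀ s : ℝ, (2:ℝ≥0∞) ^ s + (2:ℝ≥0∞) ^ s = (2:ℝ≥0∞) ^ (s+1) := by
    intro s
    rw [ENNReal.rpow_add _ _ h20 h2t, ENNReal.rpow_one, mul_two]
  set D : ℤ → Set (Fin n → ℚ_[p]) := fun k => {x | (2:ℝ≥0∞) ^ (k:ℝ) < M x} with hD
  have step2 : ∀ k, D k ⊆ {x | lam k < maxFn μ (gk k) x} := by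
    intro k x hx
    simp only [hD, Set.mem_setOf_eq] at hx
    by_contra hcon
    rw [Set.mem_setOf_eq, not_lt] at hcon
    have h1 : M x ≤ lam k + lam k := le_trans (step1 k x) (add_le_add hcon le_rfl)
    rw [hlam] at h1
    rw [hdouble ((k:ℝ)-1), show (k:ℝ)-1+1 = (k:ℝ) by ring] at h1
    exact absurd (lt_of_lt_of_le hx h1) (lt_irrefl _)
  have step4 : ∀ k, μ (D k) ≤ (lam k)⁻¹ * ∫⁻ x, gk k x ∂μ := by
    intro k
    have hw := weak11 μ hn (hgkfin k) (hlam0 k) (hlamt k)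
    have h1 : μ (D k) ≤ μ {x | lam k < maxFn μ (gk k) x} := measure_mono (step2 k)
    have h2 : μ {x | lam k < maxFn μ (gk k) x} =
        (lam k)⁻¹ * (lam k * μ {x | lam k < maxFn μ (gk k) x}) := by
      rw [← mul_assoc, ENNReal.inv_mul_cancel (hlam0 k) (hlamt k), one_mul]
    calc μ (D k) ≤ μ {x | lam k < maxFn μ (gk k) x} := h1
      _ = (lam k)⁻¹ * (lam k * μ {x | lam k < maxFn μ (gk k) x}) := h2
      _ ≤ (lam k)⁻¹ * ∫⁻ x, gk k x ∂μ := mul_le_mul_right hw _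
  -- the maximal function is a.e. finite
  have step5 : μ {x | M x = ∞} = 0 := by
    have hsub : ∀ m : ℕ, {x | M x = ∞} ⊆ D (m : ℤ) := by
      intro m x hx
      simp only [Set.mem_setOf_eq] at hx
      show (2:ℝ≥0∞) ^ (((m:ℤ):ℝ)) < M x
      rw [hx]
      exact (hrpow_ne_top 2 h20 h2t _).lt_top
    have hbd : ∀ m : ℕ, μ {x | M x = ∞} ≤ ((2:ℝ≥0∞) ^ r * Ir) * ((2:ℝ≥0∞) ^ (-r)) ^ m := by
      intro m
      have h1 : μ {x | M x = ∞} ≤ (lam m)⁻¹ * ((lam m) ^ (1-r) * Ir) :=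
        le_trans (measure_mono (hsub m)) (le_trans (step4 m) (mul_le_mul_right (hgkint m) _))
      have h2 : (lam (m:ℤ))⁻¹ * ((lam (m:ℤ)) ^ (1-r) * Ir) =
          ((2:ℝ≥0∞) ^ r * Ir) * ((2:ℝ≥0∞) ^ (-r)) ^ m := by
        simp only [hlam]
        rw [← ENNReal.rpow_neg_one, ← ENNReal.rpow_mul, ← ENNReal.rpow_mul,
          ← ENNReal.rpow_natCast ((2:ℝ≥0∞) ^ (-r)) m, ← ENNReal.rpow_mul]
        rw [← mul_assoc, ← ENNReal.rpow_add _ _ h20 h2t]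
        have he : ((((m:ℤ):ℝ)) - 1) * (-1) + ((((m:ℤ):ℝ)) - 1) * (1 - r) = r + (-r * ((m:ℕ):ℝ)) := by
          push_cast; ring
        rw [he, ENNReal.rpow_add _ _ h20 h2t]
        ring
      rw [h2] at h1
      exact h1
    have hb1 : (2:ℝ≥0∞) ^ (-r) < 1 := by
      rw [ENNReal.rpow_neg, ENNReal.inv_lt_one]
      exact ENNReal.one_lt_rpow (by norm_num) hrpos
    have htend : Filter.Tendsto (fun m : ℕ => ((2:ℝ≥0∞) ^ r * Ir) * ((2:ℝ≥0∞) ^ (-r)) ^ m)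
        Filter.atTop (nhds 0) := by
      have h0 := ENNReal.tendsto_pow_atTop_nhds_zero_of_lt_one hb1
      have := ENNReal.Tendsto.const_mul h0 (Or.inr (ENNReal.mul_ne_top (hrpow_ne_top 2 h20 h2t r) hgr))
      simpa using this
    have := ge_of_tendsto' htend hbd
    exact le_antisymm this (zero_le)
  -- layer cake
  have hMmeas : Measurable M := measurable_maxFn μ g
  set A : ℤ → Set (Fin n → ℚ_[p]) := fun k =>
    {x | (2:ℝ≥0∞) ^ (k:ℝ) < M x ∧ M x ≤ (2:ℝ≥0∞) ^ ((k:ℝ)+1)} with hA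
  have hAmeas : ∀ k, MeasurableSet (A k) := fun k => by
    have : A k = M ⁻¹' (Set.Ioc ((2:ℝ≥0∞) ^ (k:ℝ)) ((2:ℝ≥0∞) ^ ((k:ℝ)+1))) := rfl
    rw [this]
    exact hMmeas measurableSet_Ioc
  have hcover : Set.univ ⊆ {x | M x = 0} ∪ ({x | M x = ∞} ∪ ⋃ k : ℤ, A k) := by
    intro x _
    rcases eq_or_ne (M x) 0 with h0 | h0
    · exact Or.inl h0
    rcases eq_or_ne (M x) ∞ with ht | ht
    · exact Or.inr (Or.inl ht)
    refine Or.inr (Or.inr ?_)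
    obtain ⟨k, hk1, hk2⟩ : ∃ k : ℤ, ((2:ℝ≥0∞) ^ (k:ℝ) < M x) ∧
        ∀ z : ℤ, ((2:ℝ≥0∞) ^ (z:ℝ) < M x) → z ≤ k := by
      refine Int.exists_greatest_of_bdd ?_ ?_
      · obtain ⟨m, hm⟩ := ENNReal.exists_nat_gt ht
        refine ⟨m, fun z hz => ?_⟩
        by_contra hcon
        push_neg at hcon
        have h1 : ((m:ℝ≥0∞)) ≤ (2:ℝ≥0∞) ^ ((z:ℝ)) := by
          calc ((m:ℝ≥0∞)) ≤ (2:ℝ≥0∞) ^ (m:ℕ) := by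
                exact_mod_cast Nat.cast_le.2 (Nat.lt_two_pow_self (n := m)).le
            _ = (2:ℝ≥0∞) ^ ((m:ℝ)) := by rw [← ENNReal.rpow_natCast]
            _ ≤ (2:ℝ≥0∞) ^ ((z:ℝ)) := by
                apply ENNReal.rpow_le_rpow_of_exponent_le (by norm_num)
                exact_mod_cast hcon.le
        exact absurd (h1.trans_lt hz) hm.not_gt
      · obtain ⟨m, hm⟩ := ENNReal.exists_inv_two_pow_lt h0
        refine ⟨-(m:ℤ), ?_⟩
        have he : ((-(m:ℤ) : ℤ):ℝ) = -(m:ℝ) := by push_cast; ring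
        rw [he, ENNReal.rpow_neg, ENNReal.rpow_natCast, ENNReal.inv_pow]
        exact hm
    refine Set.mem_iUnion.2 ⟨k, hk1, ?_⟩
    by_contra hcon
    push_neg at hcon
    have h2 := hk2 (k+1) (by
      have he : (((k+1 : ℤ)):ℝ) = (k:ℝ) + 1 := by push_cast; ring
      rw [he]
      exact hcon)
    omega
  have hzeroset : ∫⁻ x in {x | M x = 0}, M x ^ r ∂μ = 0 := by
    have hmeas0 : MeasurableSet {x | M x = 0} := hMmeas (measurableSet_singleton 0)
    have h0 : ∫⁻ x in {x | M x = 0}, M x ^ r ∂μ = ∫⁻ _x in {x | M x = 0}, (0:ℝ≥0∞) ∂μ :=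
      setLIntegral_congr_fun hmeas0 (
        (fun x hx => by rw [Set.mem_setOf_eq] at hx; rw [hx, ENNReal.zero_rpow_of_pos hrpos]))
    rw [h0]
    simp
  have step6 : ∫⁻ x, M x ^ r ∂μ ≤ ∑' k : ℤ, (2:ℝ≥0∞) ^ (((k:ℝ)+1)*r) * μ (D k) := by
    calc ∫⁻ x, M x ^ r ∂μ = ∫⁻ x in Set.univ, M x ^ r ∂μ := (setLIntegral_univ _).symm
      _ ≤ ∫⁻ x in {x | M x = 0} ∪ ({x | M x = ∞} ∪ ⋃ k : ℤ, A k), M x ^ r ∂μ :=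
          lintegral_mono_set hcover
      _ ≤ (∫⁻ x in {x | M x = 0}, M x ^ r ∂μ) +
          ((∫⁻ x in {x | M x = ∞}, M x ^ r ∂μ) + ∫⁻ x in ⋃ k : ℤ, A k, M x ^ r ∂μ) :=
          le_trans (lintegral_union_le _ _ _) (add_le_add le_rfl (lintegral_union_le _ _ _))
      _ = ∫⁻ x in ⋃ k : ℤ, A k, M x ^ r ∂μ := by
          rw [hzeroset, setLIntegral_measure_zero _ _ step5, zero_add, zero_add]
      _ ≤ ∑' k : ℤ, ∫⁻ x in A k, M x ^ r ∂μ := lintegral_iUnion_le _ _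
      _ ≤ ∑' k : ℤ, (2:ℝ≥0∞) ^ (((k:ℝ)+1)*r) * μ (D k) := by
          refine ENNReal.tsum_le_tsum fun k => ?_
          have h1 : ∫⁻ x in A k, M x ^ r ∂μ ≤ ∫⁻ _x in A k, (2:ℝ≥0∞) ^ (((k:ℝ)+1)*r) ∂μ := by
            refine lintegral_mono_ae ((ae_restrict_iff' (hAmeas k)).2 (Filter.Eventually.of_forall
              (fun x hx => ?_)))
            obtain ⟨-, hx2⟩ := hx
            calc M x ^ r ≤ ((2:ℝ≥0∞) ^ ((k:ℝ)+1)) ^ r := ENNReal.rpow_le_rpow hx2 hrpos.le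
              _ = (2:ℝ≥0∞) ^ (((k:ℝ)+1)*r) := by rw [← ENNReal.rpow_mul]
          refine le_trans h1 ?_
          rw [setLIntegral_const]
          exact mul_le_mul_right (measure_mono fun x hx => hx.1) _
  -- combine
  have hlt1 : (2:ℝ≥0∞) ^ ((1:ℝ)-r) < 1 := by
    rw [show (1:ℝ)-r = -(r-1) by ring, ENNReal.rpow_neg, ENNReal.inv_lt_one]
    exact ENNReal.one_lt_rpow (by norm_num) (by linarith)
  have hinv_ne_top : (1 - (2:ℝ≥0∞) ^ ((1:ℝ)-r))⁻¹ ≠ ∞ :=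
    ENNReal.inv_ne_top.2 (tsub_pos_of_lt hlt1).ne'
  have hsummand : ∀ (k : ℤ) x, ((2:ℝ≥0∞) ^ (((k:ℝ)+1)*r) * (lam k)⁻¹) * gk k x =
      (2:ℝ≥0∞) ^ (r+1) * ((if lam k < g x then (2:ℝ≥0∞) ^ ((r-1)*(k:ℝ)) else 0) * g x) := by
    intro k x
    simp only [hgk]
    split_ifs with h
    · simp only [hlam]
      rw [← ENNReal.rpow_neg, ← ENNReal.rpow_add _ _ h20 h2t, ← mul_assoc,
        ← ENNReal.rpow_add _ _ h20 h2t]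
      congr 2
      ring
    · simp
  calc ∫⁻ x, M x ^ r ∂μ ≤ ∑' k : ℤ, (2:ℝ≥0∞) ^ (((k:ℝ)+1)*r) * μ (D k) := step6
    _ ≤ ∑' k : ℤ, (2:ℝ≥0∞) ^ (((k:ℝ)+1)*r) * ((lam k)⁻¹ * ∫⁻ x, gk k x ∂μ) :=
        ENNReal.tsum_le_tsum fun k => mul_le_mul_right (step4 k) _
    _ = ∑' k : ℤ, ∫⁻ x, ((2:ℝ≥0∞) ^ (((k:ℝ)+1)*r) * (lam k)⁻¹) * gk k x ∂μ := by
        refine tsum_congr fun k => ?_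
        rw [← mul_assoc, ← lintegral_const_mul' _ _ (ENNReal.mul_ne_top
          (hrpow_ne_top 2 h20 h2t _) (ENNReal.inv_ne_top.2 (hlam0 k)))]
    _ = ∫⁻ x, ∑' k : ℤ, ((2:ℝ≥0∞) ^ (((k:ℝ)+1)*r) * (lam k)⁻¹) * gk k x ∂μ :=
        (lintegral_tsum fun k => ((hgkmeas k).const_mul _).aemeasurable).symm
    _ ≤ ∫⁻ x, ((2:ℝ≥0∞) ^ (r+1) * ((1 - (2:ℝ≥0∞) ^ ((1:ℝ)-r))⁻¹ * (2:ℝ≥0∞) ^ (r-1))) * g x ^ r ∂μ := by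
        refine lintegral_mono fun x => ?_
        calc ∑' k : ℤ, ((2:ℝ≥0∞) ^ (((k:ℝ)+1)*r) * (lam k)⁻¹) * gk k x
            = (2:ℝ≥0∞) ^ (r+1) * ∑' k : ℤ,
              (if lam k < g x then (2:ℝ≥0∞) ^ ((r-1)*(k:ℝ)) else 0) * g x := by
              rw [← ENNReal.tsum_mul_left]
              exact tsum_congr fun k => by rw [hsummand k x]
          _ ≤ (2:ℝ≥0∞) ^ (r+1) * ((1 - (2:ℝ≥0∞) ^ ((1:ℝ)-r))⁻¹ * (2:ℝ≥0∞) ^ (r-1) * g x ^ r) := by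
              refine mul_le_mul_right ?_ _
              have := aux_geom hr (g x)
              simpa only [hlam] using this
          _ = ((2:ℝ≥0∞) ^ (r+1) * ((1 - (2:ℝ≥0∞) ^ ((1:ℝ)-r))⁻¹ * (2:ℝ≥0∞) ^ (r-1))) * g x ^ r := by
              ring
    _ = (2:ℝ≥0∞) ^ (r+1) * ((1 - (2:ℝ≥0∞) ^ ((1:ℝ)-r))⁻¹ * (2:ℝ≥0∞) ^ (r-1)) * Ir :=
        lintegral_const_mul' _ _ (ENNReal.mul_ne_top (hrpow_ne_top 2 h20 h2t _)
          (ENNReal.mul_ne_top hinv_ne_top (hrpow_ne_top 2 h20 h2t _)))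

end FracMaxAux3

set_option maxHeartbeats 1000000 in
set_option linter.unusedVariables false in
theorem fracMax_bounded_const
    (hn : 0 < n) [BorelSpace (Fin n → ℚ_[p])]
    (μ : Measure (Fin n → ℚ_[p])) [μ.IsAddHaarMeasure]
    (hμ : μ (Metric.closedBall 0 1) = 1)
    (α : ℝ) (hα0 : 0 < α) (hαn : α < n)
    (r q : ℝ) (hr1 : 1 < r) (hrn : r < (n : ℝ) / α) (hq : 1 / q = 1 / r - α / (n : ℝ)) :
    ∃ C : ℝ, 0 < C ∧ ∀ f : (Fin n → ℚ_[p]) → ℝ, MemLp f (ENNReal.ofReal r) μ →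
      (∫⁻ x, fracMax μ α f x ^ q ∂μ) ^ (1 / q) ≤
        ENNReal.ofReal C * eLpNorm f (ENNReal.ofReal r) μ := by
  have hn' : (0:ℝ) < n := by exact_mod_cast hn
  have hr0 : (0:ℝ) < r := by linarith
  have hαn' : α / (n:ℝ) < 1 / r := by
    rw [div_lt_div_iff₀ hn' hr0]
    calc α * r < α * ((n:ℝ)/α) := (mul_lt_mul_iff_right₀ hα0).2 hrn
      _ = 1 * n := by field_simp
  have hq0 : (0:ℝ) < 1/q := by rw [hq]; linarith
  have hqpos : (0:ℝ) < q := by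
    rcases lt_trichotomy q 0 with h|h|h
    · have : 1/q < 0 := div_neg_of_pos_of_neg one_pos h
      linarith
    · rw [h] at hq0; norm_num at hq0
    · exact h
  have hq0' : q ≠ 0 := ne_of_gt hqpos
  have hr0' : r ≠ 0 := ne_of_gt hr0
  have hn0 : (n:ℝ) ≠ 0 := ne_of_gt hn'
  have hrq : r < q := by
    have h1 : 1/q < 1/r := by
      rw [hq]
      have : 0 < α / (n:ℝ) := div_pos hα0 hn'
      linarith
    rw [div_lt_div_iff₀ hqpos hr0] at h1
    linarith
  have hθ0 : (0:ℝ) < r/q := div_pos hr0 hqpos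
  have hθ1 : r/q < 1 := (div_lt_one hqpos).2 hrq
  set θ := r/q with hθ
  have hexp : (α/(n:ℝ) - 1) + θ + (1 - 1/r)*(1 - θ) = 0 := by
    have h1 : (α/(n:ℝ) - 1) + θ + (1 - 1/r)*(1 - θ) = α/(n:ℝ) - 1/r + (1/r)*θ := by ring
    have h2 : (1/r)*θ = 1/q := by rw [hθ]; field_simp
    rw [h1, h2, hq]
    ring
  have hrpow_ne_top : ∀ (a : ℝ≥0∞), a ≠ 0 → a ≠ ⊤ → ∀ e : ℝ, a ^ e ≠ ⊤ := by
    intro a ha0 hat e h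
    rcases ENNReal.rpow_eq_top_iff.1 h with ⟨h1, _⟩ | ⟨h1, _⟩
    exacts [ha0 h1, hat h1]
  have h20 : (2:ℝ≥0∞) ≠ 0 := by norm_num
  have h2t : (2:ℝ≥0∞) ≠ ∞ := by norm_num
  set K : ℝ≥0∞ := (2:ℝ≥0∞) ^ (r+1) * ((1 - (2:ℝ≥0∞) ^ (1-r))⁻¹ * (2:ℝ≥0∞) ^ (r-1)) with hK
  have hlt1 : (2:ℝ≥0∞) ^ ((1:ℝ)-r) < 1 := by
    rw [show (1:ℝ)-r = -(r-1) by ring, ENNReal.rpow_neg, ENNReal.inv_lt_one]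
    exact ENNReal.one_lt_rpow (by norm_num) (by linarith)
  have hK_ne_top : K ≠ ∞ :=
    ENNReal.mul_ne_top (hrpow_ne_top 2 h20 h2t _)
      (ENNReal.mul_ne_top (ENNReal.inv_ne_top.2 (tsub_pos_of_lt hlt1).ne')
        (hrpow_ne_top 2 h20 h2t _))
  have hKq_ne_top : K ^ (1/q) ≠ ∞ := hrpow_ne_top K
    (by
      intro h0
      rcases mul_eq_zero.1 h0 with h | h
      · exact (ENNReal.rpow_pos (by norm_num) h2t).ne' h
      rcases mul_eq_zero.1 h with h | h
      · exact (ENNReal.inv_ne_zero.2 (ne_top_of_le_ne_top one_ne_top tsub_le_self)) h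
      · exact (ENNReal.rpow_pos (by norm_num) h2t).ne' h)
    hK_ne_top _
  refine ⟨(K ^ (1/q)).toReal + 1, by positivity, ?_⟩
  intro f hf
  have hae : AEMeasurable (fun x => (‖f x‖₊ : ℝ≥0∞)) μ := hf.aestronglyMeasurable.enorm
  set g := hae.mk _ with hgdef
  have hgmeas : Measurable g := hae.measurable_mk
  have hgae : (fun x => (‖f x‖₊ : ℝ≥0∞)) =ᵐ[μ] g := hae.ae_eq_mk
  have hofr0 : ENNReal.ofReal r ≠ 0 := by
    simp only [ne_eq, ENNReal.ofReal_eq_zero, not_le]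
    linarith
  have hofrt : ENNReal.ofReal r ≠ ∞ := ENNReal.ofReal_ne_top
  have htoReal : (ENNReal.ofReal r).toReal = r := ENNReal.toReal_ofReal hr0.le
  have heLp : eLpNorm f (ENNReal.ofReal r) μ = (∫⁻ x, g x ^ r ∂μ) ^ (1/r) := by
    rw [eLpNorm_eq_lintegral_rpow_enorm_toReal hofr0 hofrt, htoReal]
    congr 1
    apply lintegral_congr_ae
    exact hgae.mono fun x hx => congrArg (fun t : ℝ≥0∞ => t ^ r) hx
  set N := (∫⁻ x, g x ^ r ∂μ) ^ (1/r) with hNdef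
  have hIr_ne_top : ∫⁻ x, g x ^ r ∂μ ≠ ∞ := by
    intro hcon
    have h2 := hf.2
    rw [heLp, hNdef, hcon, ENNReal.top_rpow_of_pos (by positivity)] at h2
    exact (lt_irrefl _) h2
  have hN_ne_top : N ≠ ∞ := ENNReal.rpow_ne_top_of_nonneg (by positivity) hIr_ne_top
  have hfrac : ∀ x, fracMax μ α f x =
      ⨆ γ : ℤ, μ (pBall x γ) ^ (α/(n:ℝ)-1) * ∫⁻ y in pBall x γ, g y ∂μ := by
    intro x
    unfold fracMax
    refine iSup_congr fun γ => ?_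
    congr 1
    exact lintegral_congr_ae (ae_restrict_of_ae hgae)
  -- pointwise Hoelder bound
  have hpt : ∀ x, fracMax μ α f x ≤ (maxFn μ g x) ^ θ * N ^ (1-θ) := by
    intro x
    rw [hfrac x]
    refine iSup_le fun γ => ?_
    rw [measure_pBall_eq μ x γ]
    set V := μ (pBall (0 : Fin n → ℚ_[p]) γ) with hV
    have hV0 : V ≠ 0 := (measure_pBall_pos μ 0 γ).ne'
    have hVt : V ≠ ∞ := (measure_pBall_lt_top μ 0 γ).ne
    set J := ∫⁻ y in pBall x γ, g y ∂μ with hJ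
    have hconj : r.HolderConjugate (r/(r-1)) := Real.HolderConjugate.conjExponent hr1
    have hJle : J ≤ N * V ^ (1 - 1/r) := by
      have h2 := ENNReal.lintegral_mul_le_Lp_mul_Lq (μ.restrict (pBall x γ)) hconj
        hgmeas.aemeasurable (aemeasurable_const (b := (1:ℝ≥0∞)))
      simp only [Pi.mul_apply, mul_one, ENNReal.one_rpow, lintegral_const, one_mul,
        Measure.restrict_apply MeasurableSet.univ, Set.univ_inter] at h2
      calc J ≤ (∫⁻ a in pBall x γ, g a ^ r ∂μ) ^ (1/r) *
            (μ (pBall x γ)) ^ (1/(r/(r-1))) := h2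
        _ ≤ N * V ^ (1 - 1/r) := by
            have he : 1/(r/(r-1)) = 1 - 1/r := by field_simp
            rw [he, measure_pBall_eq μ x γ, ← hV]
            refine mul_le_mul_left (ENNReal.rpow_le_rpow ?_ (by positivity)) _
            exact setLIntegral_le_lintegral _ _
    rcases eq_or_ne J 0 with hJ0 | hJ0
    · rw [hJ0, mul_zero]
      exact zero_le
    have hJt : J ≠ ∞ := ne_top_of_le_ne_top
      (ENNReal.mul_ne_top hN_ne_top (hrpow_ne_top V hV0 hVt _)) hJle
    have hVinvJ_ne_top : V⁻¹ * J ≠ ∞ := ENNReal.mul_ne_top (ENNReal.inv_ne_top.2 hV0) hJt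
    calc V ^ (α/(n:ℝ)-1) * J
        = V ^ (α/(n:ℝ)-1) * (J ^ θ * J ^ (1-θ)) := by
          rw [← ENNReal.rpow_add _ _ hJ0 hJt, show θ + (1-θ) = (1:ℝ) by ring,
            ENNReal.rpow_one]
      _ = V ^ (α/(n:ℝ)-1) * ((V ^ θ * (V⁻¹ * J) ^ θ) * J ^ (1-θ)) := by
          have hVJ : V * (V⁻¹ * J) = J := by
            rw [← mul_assoc, ENNReal.mul_inv_cancel hV0 hVt, one_mul]
          rw [← ENNReal.mul_rpow_of_ne_top hVt hVinvJ_ne_top, hVJ]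
      _ ≤ V ^ (α/(n:ℝ)-1) * ((V ^ θ * (V⁻¹ * J) ^ θ) * (N ^ (1-θ) * (V ^ (1-1/r)) ^ (1-θ))) := by
          refine mul_le_mul_right (mul_le_mul_right ?_ _) _
          rw [← ENNReal.mul_rpow_of_ne_top hN_ne_top (hrpow_ne_top V hV0 hVt _)]
          exact ENNReal.rpow_le_rpow hJle (by linarith)
      _ = (V ^ (α/(n:ℝ)-1) * V ^ θ * (V ^ (1-1/r)) ^ (1-θ)) * ((V⁻¹ * J) ^ θ * N ^ (1-θ)) := by
          ring
      _ = (V⁻¹ * J) ^ θ * N ^ (1-θ) := by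
          have hVpow : V ^ (α/(n:ℝ)-1) * V ^ θ * (V ^ ((1:ℝ)-1/r)) ^ ((1:ℝ)-θ) = 1 := by
            rw [← ENNReal.rpow_mul V ((1:ℝ)-1/r) ((1:ℝ)-θ), ← ENNReal.rpow_add _ _ hV0 hVt,
              ← ENNReal.rpow_add _ _ hV0 hVt, hexp, ENNReal.rpow_zero]
          rw [hVpow, one_mul]
      _ ≤ (maxFn μ g x) ^ θ * N ^ (1-θ) := by
          refine mul_le_mul_left (ENNReal.rpow_le_rpow ?_ hθ0.le) _
          exact le_iSup (fun γ => (μ (pBall (0 : Fin n → ℚ_[p]) γ))⁻¹ *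
            ∫⁻ y in pBall x γ, g y ∂μ) γ
  -- integrate
  have hNq_ne_top : N ^ ((1-θ)*q) ≠ ∞ :=
    ENNReal.rpow_ne_top_of_nonneg (mul_nonneg (by linarith) hqpos.le) hN_ne_top
  have hNsum : N ^ (r:ℝ) * N ^ ((1-θ)*q) = N ^ q := by
    rcases eq_or_ne N 0 with h0 | h0
    · rw [h0, ENNReal.zero_rpow_of_pos hr0, ENNReal.zero_rpow_of_pos hqpos, zero_mul]
    · rw [← ENNReal.rpow_add _ _ h0 hN_ne_top]
      congr 1
      rw [hθ]
      field_simp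
      ring
  have hNr : ∫⁻ x, g x ^ r ∂μ = N ^ (r:ℝ) := by
    rw [hNdef, ← ENNReal.rpow_mul, one_div_mul_cancel hr0', ENNReal.rpow_one]
  calc (∫⁻ x, fracMax μ α f x ^ q ∂μ) ^ (1/q)
      ≤ (∫⁻ x, ((maxFn μ g x) ^ θ * N ^ (1-θ)) ^ q ∂μ) ^ (1/q) :=
        ENNReal.rpow_le_rpow (lintegral_mono fun x =>
          ENNReal.rpow_le_rpow (hpt x) hqpos.le) hq0.le
    _ = (∫⁻ x, (maxFn μ g x) ^ (r:ℝ) * N ^ ((1-θ)*q) ∂μ) ^ (1/q) := by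
        congr 1
        refine lintegral_congr fun x => ?_
        rw [ENNReal.mul_rpow_of_nonneg _ _ hqpos.le, ← ENNReal.rpow_mul, ← ENNReal.rpow_mul,
          show θ*q = r from by rw [hθ]; field_simp]
    _ = ((∫⁻ x, (maxFn μ g x) ^ (r:ℝ) ∂μ) * N ^ ((1-θ)*q)) ^ (1/q) := by
        rw [lintegral_mul_const' _ _ hNq_ne_top]
    _ ≤ ((K * ∫⁻ x, g x ^ r ∂μ) * N ^ ((1-θ)*q)) ^ (1/q) :=
        ENNReal.rpow_le_rpow (mul_le_mul_left
          (strongType μ hn hr1 hgmeas hIr_ne_top) _) hq0.le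
    _ = (K * N ^ q) ^ (1/q) := by
        rw [hNr, mul_assoc, hNsum]
    _ = K ^ (1/q) * N := by
        rw [ENNReal.mul_rpow_of_nonneg _ _ hq0.le, ← ENNReal.rpow_mul,
          mul_one_div_cancel hq0', ENNReal.rpow_one]
    _ ≤ ENNReal.ofReal ((K ^ (1/q)).toReal + 1) * eLpNorm f (ENNReal.ofReal r) μ := by
        rw [heLp]
        refine mul_le_mul_left ?_ _
        calc K ^ (1/q) = ENNReal.ofReal ((K ^ (1/q)).toReal) :=
              (ENNReal.ofReal_toReal hKq_ne_top).symm
          _ ≤ ENNReal.ofReal ((K ^ (1/q)).toReal + 1) :=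
              ENNReal.ofReal_le_ofReal (by linarith)


end
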